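/- arXiv:1502.05939 — 4 statements merged into one kernel-verified Lean document; each statement's English description precedes it below -/
import Mathlib

section
/- There exists an absolute constant C > 0 such that the following holds. Let m be a positive real, 0 < p < 1, q = 1 - p, and let β be a random variable with P{β = 0} = p and P{β = m} = q, with characteristic function φ(t) = E e^{2πitβ}. Then for every real t with q·|sin(πtm)| ≤ 1/3, one has φ(t) = exp(2iπqmt − 2π²pqm²t² + B(t)) for some complex number B(t) with |B(t)| ≤ C·q·m³·|t|³. -/
open MeasureTheory Complex

/-!
Put `θ = 2π t m`, so that `φ(t) = p + q e^{iθ} = e^{iqθ} c(θ)` with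
`c(θ) = p e^{-iqθ} + q e^{ipθ}` the characteristic function of `β` centred at its mean, and take
`B = log c(θ) + p q θ² / 2`. Always `|c(θ) - 1| ≤ 2pq|θ|`, and since the first-order terms of
`c` cancel, `c(θ) = 1 - pqθ²/2 + O(q|θ|³)` for `|θ| ≤ 1`; there `log c = (c - 1) + O(|c - 1|²)`
gives the bound. For `|θ| > 1` the hypothesis on `sin (θ/2)` keeps `|c(θ)| ≥ 1/3`, and on the
annulus `1/3 ≤ |z| ≤ 1` the logarithm is `O(|z - 1|) = O(pq|θ|)`.
-/

namespace Complex

lemma norm_exp_ofReal_mul_I_sub_quadratic_le {y : ℝ} (hy : |y| ≤ 1) :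
    ‖exp (y * I) - (1 + y * I - y ^ 2 / 2)‖ ≤ 2 / 9 * |y| ^ 3 := by
  have h := exp_bound (x := y * I) (by simpa using hy) (n := 3) (by norm_num)
  have hsum : ∑ k ∈ Finset.range 3, ((y : ℂ) * I) ^ k / k.factorial = 1 + y * I - y ^ 2 / 2 := by
    simp only [Finset.sum_range_succ, Finset.sum_range_zero, Nat.factorial_zero,
      Nat.factorial_one, Nat.factorial_two, Nat.cast_one, Nat.cast_ofNat]
    linear_combination ((y : ℂ) ^ 2 / 2) * I_sq
  rw [hsum] at h
  refine h.trans_eq ?_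
  rw [norm_mul, norm_real, norm_I, mul_one, Real.norm_eq_abs]
  norm_num [Nat.factorial, mul_comm]

lemma norm_log_one_add_sub_self_le_sq {w : ℂ} (hw : ‖w‖ ≤ 1 / 2) :
    ‖log (1 + w) - w‖ ≤ ‖w‖ ^ 2 := by
  have hinv : (1 - ‖w‖)⁻¹ ≤ 2 := by rw [inv_le_comm₀ (by linarith) two_pos]; linarith
  calc _ ≤ ‖w‖ ^ 2 * (1 - ‖w‖)⁻¹ / 2 := norm_log_one_add_sub_self_le (by linarith)
    _ ≤ ‖w‖ ^ 2 * 2 / 2 := by gcongr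
    _ = ‖w‖ ^ 2 := by ring

lemma norm_log_le_of_norm_mem_Icc {z : ℂ} (h₁ : 1 / 3 ≤ ‖z‖) (h₂ : ‖z‖ ≤ 1) :
    ‖log z‖ ≤ 12 * ‖z - 1‖ := by
  rcases le_or_gt ‖z - 1‖ (1 / 2) with hz | hz
  · have := norm_log_one_add_half_le_self hz
    rw [add_sub_cancel] at this
    linarith [norm_nonneg (z - 1)]
  have hre : |(log z).re| ≤ 2 := by
    have hz0 : 0 < ‖z‖ := by linarith
    rw [log_re, abs_of_nonpos (Real.log_nonpos hz0.le h₂), ← Real.log_inv]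
    have := Real.log_le_sub_one_of_pos (inv_pos.2 hz0)
    have : ‖z‖⁻¹ ≤ 3 := by rw [inv_le_comm₀ hz0 (by norm_num)]; linarith
    linarith
  have him : |(log z).im| ≤ 4 := by
    rw [log_im]; exact (abs_arg_le_pi z).trans Real.pi_le_four
  linarith [norm_le_abs_re_add_abs_im (log z)]

end Complex

section TwoPoint

variable {p q θ : ℝ}

noncomputable def centredTwoPoint (p q θ : ℝ) : ℂ :=
  p * exp (-(q * θ) * I) + q * exp (p * θ * I)

lemma exp_mul_centredTwoPoint (hpq : p + q = 1) :
    exp (q * θ * I) * centredTwoPoint p q θ = p + q * exp (θ * I) := by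
  have hpqC : (p : ℂ) + q = 1 := by exact_mod_cast hpq
  rw [centredTwoPoint, mul_add, mul_left_comm, ← exp_add, mul_left_comm, ← exp_add,
    show (q : ℂ) * θ * I + -(q * θ) * I = 0 by ring,
    show (q : ℂ) * θ * I + p * θ * I = θ * I by linear_combination θ * I * hpqC]
  simp

lemma norm_centredTwoPoint (hpq : p + q = 1) :
    ‖centredTwoPoint p q θ‖ = ‖(p : ℂ) + q * exp (θ * I)‖ := by
  rw [← exp_mul_centredTwoPoint hpq, norm_mul, ← ofReal_mul, norm_exp_ofReal_mul_I, one_mul]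

lemma centredTwoPoint_sub_one (hpq : p + q = 1) :
    centredTwoPoint p q θ - 1 =
      p * (exp (↑(-(q * θ)) * I) - 1) + q * (exp (↑(p * θ) * I) - 1) := by
  have : (p : ℂ) + q = 1 := by exact_mod_cast hpq
  rw [centredTwoPoint]
  push_cast
  linear_combination this

lemma norm_centredTwoPoint_sub_one_le (hp : 0 ≤ p) (hq : 0 ≤ q) (hpq : p + q = 1) :
    ‖centredTwoPoint p q θ - 1‖ ≤ 2 * p * q * |θ| := by
  rw [centredTwoPoint_sub_one hpq]
  have h₁ := Real.norm_exp_I_mul_ofReal_sub_one_le (x := -(q * θ))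
  have h₂ := Real.norm_exp_I_mul_ofReal_sub_one_le (x := p * θ)
  rw [mul_comm I] at h₁ h₂
  calc _ ≤ p * ‖-(q * θ)‖ + q * ‖p * θ‖ := by
        refine norm_add_le_of_le ?_ ?_
        · rw [norm_mul, norm_real, Real.norm_of_nonneg hp]; gcongr
        · rw [norm_mul, norm_real, Real.norm_of_nonneg hq]; gcongr
    _ = 2 * p * q * |θ| := by
        simp only [norm_neg, norm_mul, Real.norm_eq_abs, abs_of_nonneg hp, abs_of_nonneg hq]
        ring

lemma norm_centredTwoPoint_sub_one_add_le (hp : 0 ≤ p) (hq : 0 ≤ q) (hpq : p + q = 1)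
    (hθ : |θ| ≤ 1) :
    ‖centredTwoPoint p q θ - 1 + p * q * θ ^ 2 / 2‖ ≤ 2 / 9 * q * |θ| ^ 3 := by
  have habs_q : |-(q * θ)| ≤ 1 := by
    rw [abs_neg, abs_mul, abs_of_nonneg hq]; nlinarith [abs_nonneg θ]
  have habs_p : |p * θ| ≤ 1 := by
    rw [abs_mul, abs_of_nonneg hp]; nlinarith [abs_nonneg θ]
  have h₁ := norm_exp_ofReal_mul_I_sub_quadratic_le habs_q
  have h₂ := norm_exp_ofReal_mul_I_sub_quadratic_le habs_p
  have hpqC : (p : ℂ) + q = 1 := by exact_mod_cast hpq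
  -- the linear terms `∓ i p q θ` cancel, the quadratic ones add up to `- p q θ² / 2`
  have hsplit : centredTwoPoint p q θ - 1 + p * q * θ ^ 2 / 2 =
      p * (exp (↑(-(q * θ)) * I) - (1 + ↑(-(q * θ)) * I - ↑(-(q * θ)) ^ 2 / 2)) +
        q * (exp (↑(p * θ) * I) - (1 + ↑(p * θ) * I - ↑(p * θ) ^ 2 / 2)) := by
    rw [centredTwoPoint_sub_one hpq]
    push_cast
    linear_combination -(p * q * θ ^ 2 / 2 : ℂ) * hpqC
  have hpq3 : p * q ^ 3 + q * p ^ 3 ≤ q := by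
    have : p * (p ^ 2 + q ^ 2) ≤ 1 := by nlinarith [mul_nonneg hp hq]
    nlinarith [mul_le_mul_of_nonneg_left this hq]
  calc _ ≤ p * (2 / 9 * |-(q * θ)| ^ 3) + q * (2 / 9 * |p * θ| ^ 3) := by
        rw [hsplit]
        refine norm_add_le_of_le ?_ ?_
        · rw [norm_mul, norm_real, Real.norm_of_nonneg hp]; gcongr
        · rw [norm_mul, norm_real, Real.norm_of_nonneg hq]; gcongr
    _ = 2 / 9 * |θ| ^ 3 * (p * q ^ 3 + q * p ^ 3) := by
        simp only [abs_neg, abs_mul, abs_of_nonneg hp, abs_of_nonneg hq]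
        ring
    _ ≤ 2 / 9 * q * |θ| ^ 3 := by
        nlinarith [mul_le_mul_of_nonneg_left hpq3 (by positivity : (0:ℝ) ≤ 2 / 9 * |θ| ^ 3)]

lemma norm_sq_two_point (hpq : p + q = 1) :
    ‖(p : ℂ) + q * exp (θ * I)‖ ^ 2 = 1 - 4 * p * q * Real.sin (θ / 2) ^ 2 := by
  rw [exp_ofReal_mul_I, Complex.sq_norm, normSq_apply]
  simp only [add_re, add_im, mul_re, mul_im, ofReal_re, ofReal_im, I_re, I_im]
  have h₁ := Real.cos_sq (θ / 2)
  have h₂ := Real.sin_sq_add_cos_sq (θ / 2)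
  have h₃ := Real.sin_sq_add_cos_sq θ
  rw [mul_div_cancel₀ θ two_ne_zero] at h₁
  linear_combination q ^ 2 * h₃ + (p + q + 1) * hpq - 4 * p * q * h₁ + 4 * p * q * h₂

lemma norm_two_point_le_one (hp : 0 ≤ p) (hq : 0 ≤ q) (hpq : p + q = 1) :
    ‖(p : ℂ) + q * exp (θ * I)‖ ≤ 1 := by
  calc _ ≤ ‖(p : ℂ)‖ + ‖(q : ℂ) * exp (θ * I)‖ := norm_add_le _ _
    _ = 1 := by
      rw [norm_mul, norm_exp_ofReal_mul_I, norm_real, norm_real,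
        Real.norm_of_nonneg hp, Real.norm_of_nonneg hq, mul_one, hpq]

lemma one_third_le_norm_two_point (hp : 0 ≤ p) (hq : 0 ≤ q) (hpq : p + q = 1)
    (hsin : q * |Real.sin (θ / 2)| ≤ 1 / 3) :
    1 / 3 ≤ ‖(p : ℂ) + q * exp (θ * I)‖ := by
  set s := |Real.sin (θ / 2)|
  have hs₀ : 0 ≤ s := abs_nonneg _
  have hs₁ : s ≤ 1 := Real.abs_sin_le_one _
  have hsq : 4 * p * q * s ^ 2 ≤ 8 / 9 := by
    rcases le_or_gt q (1 / 3) with hq₃ | hq₃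
    · nlinarith [mul_nonneg (mul_nonneg hp hq) (by nlinarith : 0 ≤ 1 - s ^ 2)]
    · -- here `s ≤ 1 / (3 q)`, so `4 p q s² ≤ 4 p / (9 q) ≤ 8 / 9` as `p ≤ 2 q`
      have : q * (4 * p * q * s ^ 2) ≤ q * (8 / 9) := by
        nlinarith [mul_le_mul_of_nonneg_left (pow_le_pow_left₀ (by positivity) hsin 2)
          (by positivity : (0:ℝ) ≤ 4 * p)]
      exact le_of_mul_le_mul_left this (by linarith)
  have hnorm := norm_sq_two_point (θ := θ) hpq
  rw [← sq_abs (Real.sin _)] at hnorm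
  nlinarith [norm_nonneg ((p : ℂ) + q * exp (θ * I))]

lemma norm_log_centredTwoPoint_add_le (hp : 0 ≤ p) (hq : 0 ≤ q) (hpq : p + q = 1)
    (hsin : q * |Real.sin (θ / 2)| ≤ 1 / 3) :
    ‖log (centredTwoPoint p q θ) + p * q * θ ^ 2 / 2‖ ≤ 25 * q * |θ| ^ 3 := by
  set w := centredTwoPoint p q θ - 1 with hw
  have hw₁ : ‖w‖ ≤ 2 * p * q * |θ| := norm_centredTwoPoint_sub_one_le hp hq hpq
  have hx : ‖(p * q * θ ^ 2 / 2 : ℂ)‖ = p * q * |θ| ^ 2 / 2 := by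
    rw [show (p * q * θ ^ 2 / 2 : ℂ) = ((p * q * θ ^ 2 / 2 : ℝ) : ℂ) by push_cast; ring,
      norm_real, Real.norm_of_nonneg (by positivity), sq_abs]
  have hθ₀ := abs_nonneg θ
  rcases le_or_gt |θ| 1 with hθ | hθ
  · have hw₂ := norm_centredTwoPoint_sub_one_add_le hp hq hpq hθ
    have hpq₄ : p * q ≤ 1 / 4 := by nlinarith [sq_nonneg (p - q)]
    have hw_half : ‖w‖ ≤ 1 / 2 := by nlinarith [mul_nonneg hp hq]
    have hw_sq : ‖w‖ ≤ q * |θ| ^ 2 := by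
      have h := norm_sub_le_of_le hw₂ hx.le
      rw [add_sub_cancel_right] at h
      nlinarith [mul_le_mul_of_nonneg_left hθ (by positivity : 0 ≤ q * |θ| ^ 2),
        mul_le_mul_of_nonneg_right (by linarith : p ≤ 1) (by positivity : 0 ≤ q * |θ| ^ 2)]
    calc _ = ‖(log (1 + w) - w) + (w + p * q * θ ^ 2 / 2)‖ := by
          rw [hw, add_sub_cancel]; congr 1; ring
      _ ≤ ‖w‖ ^ 2 + 2 / 9 * q * |θ| ^ 3 :=
        norm_add_le_of_le (norm_log_one_add_sub_self_le_sq hw_half) hw₂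
      _ ≤ 25 * q * |θ| ^ 3 := by
        nlinarith [mul_le_mul hw_sq hw₁ (norm_nonneg w) (by positivity),
          mul_le_mul_of_nonneg_right hpq₄ (by positivity : 0 ≤ q * |θ| ^ 3)]
  · have hc := norm_centredTwoPoint (θ := θ) hpq
    have hlog : ‖log (centredTwoPoint p q θ)‖ ≤ 12 * ‖w‖ :=
      norm_log_le_of_norm_mem_Icc (hc ▸ one_third_le_norm_two_point hp hq hpq hsin)
        (hc ▸ norm_two_point_le_one hp hq hpq)
    have hθ₃ : |θ| ≤ |θ| ^ 3 := by nlinarith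
    have hθ₂ : |θ| ^ 2 ≤ |θ| ^ 3 := by nlinarith
    have hp₁ : p ≤ 1 := by linarith
    calc _ ≤ 12 * ‖w‖ + p * q * |θ| ^ 2 / 2 := norm_add_le_of_le hlog hx.le
      _ ≤ 25 * q * |θ| ^ 3 := by
        nlinarith [mul_le_mul hp₁ hθ₃ hθ₀ zero_le_one,
          mul_le_mul hp₁ hθ₂ (by positivity) zero_le_one]

lemma exists_two_point_eq_exp (hp : 0 ≤ p) (hq : 0 ≤ q) (hpq : p + q = 1)
    (hsin : q * |Real.sin (θ / 2)| ≤ 1 / 3) :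
    ∃ B : ℂ, (p : ℂ) + q * exp (θ * I) = exp (q * θ * I - p * q * θ ^ 2 / 2 + B) ∧
      ‖B‖ ≤ 25 * q * |θ| ^ 3 := by
  have hc : centredTwoPoint p q θ ≠ 0 := by
    rw [← norm_ne_zero_iff, norm_centredTwoPoint hpq]
    linarith [one_third_le_norm_two_point hp hq hpq hsin]
  refine ⟨log (centredTwoPoint p q θ) + p * q * θ ^ 2 / 2, ?_,
    norm_log_centredTwoPoint_add_le hp hq hpq hsin⟩
  rw [sub_add_add_cancel, exp_add, exp_log hc, exp_mul_centredTwoPoint hpq]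

end TwoPoint

section TwoValued

variable {Ω E : Type*} [MeasurableSpace Ω] [NormedAddCommGroup E] [NormedSpace ℝ E]
  [CompleteSpace E]
  {μ : Measure Ω} [IsProbabilityMeasure μ] {β : Ω → ℝ} {a b p q : ℝ}

lemma ae_eq_or_eq_of_two_valued (hβ : Measurable β) (hab : a ≠ b) (hp : 0 ≤ p) (hq : 0 ≤ q)
    (hpq : p + q = 1) (ha : μ {ω | β ω = a} = ENNReal.ofReal p)
    (hb : μ {ω | β ω = b} = ENNReal.ofReal q) :
    ∀ᵐ ω ∂μ, β ω = a ∨ β ω = b := by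
  have hma : MeasurableSet {ω | β ω = a} := hβ (measurableSet_singleton a)
  have hmb : MeasurableSet {ω | β ω = b} := hβ (measurableSet_singleton b)
  have hdisj : Disjoint {ω | β ω = a} {ω | β ω = b} :=
    Set.disjoint_left.2 fun _ h₁ h₂ ↦ hab (h₁.symm.trans h₂)
  refine (ae_mem_iff_measure_eq (hma.union hmb).nullMeasurableSet).2 ?_
  rw [measure_union hdisj hmb, ha, hb, ← ENNReal.ofReal_add hp hq,
    hpq, ENNReal.ofReal_one, measure_univ]

lemma integral_comp_of_two_valued (hβ : Measurable β) (hab : a ≠ b) (hp : 0 ≤ p) (hq : 0 ≤ q)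
    (hpq : p + q = 1) (ha : μ {ω | β ω = a} = ENNReal.ofReal p)
    (hb : μ {ω | β ω = b} = ENNReal.ofReal q) (f : ℝ → E) :
    ∫ ω, f (β ω) ∂μ = p • f a + q • f b := by
  have hma : MeasurableSet {ω | β ω = a} := hβ (measurableSet_singleton a)
  have hmb : MeasurableSet {ω | β ω = b} := hβ (measurableSet_singleton b)
  have hae : (fun ω ↦ f (β ω)) =ᵐ[μ] fun ω ↦
      {ω | β ω = a}.indicator (fun _ ↦ f a) ω + {ω | β ω = b}.indicator (fun _ ↦ f b) ω := by
    filter_upwards [ae_eq_or_eq_of_two_valued hβ hab hp hq hpq ha hb] with ω hω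
    rcases hω with h | h <;> simp [Set.indicator, h, hab, hab.symm]
  rw [integral_congr_ae hae, integral_add ((integrable_const _).indicator hma)
      ((integrable_const _).indicator hmb), integral_indicator_const _ hma,
    integral_indicator_const _ hmb, measureReal_def, measureReal_def, ha, hb,
    ENNReal.toReal_ofReal hp, ENNReal.toReal_ofReal hq]

end TwoValued

theorem charFun_two_valued_expansion :
    ∃ C : ℝ, 0 < C ∧
      ∀ {Ω : Type} (_ : MeasurableSpace Ω) (μ : Measure Ω), IsProbabilityMeasure μ →
      ∀ (m : ℝ), 0 < m → ∀ (p q : ℝ), 0 < p → p < 1 → q = 1 - p →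
      ∀ (β : Ω → ℝ), Measurable β →
        μ {ω | β ω = 0} = ENNReal.ofReal p →
        μ {ω | β ω = m} = ENNReal.ofReal q →
      ∀ (φ : ℝ → ℂ),
        (∀ t : ℝ, φ t = ∫ ω, Complex.exp (2 * Real.pi * Complex.I * t * (β ω)) ∂μ) →
      ∀ t : ℝ, q * |Real.sin (Real.pi * t * m)| ≤ 1 / 3 →
        ∃ B : ℂ,
          φ t = Complex.exp (2 * Real.pi * Complex.I * q * m * t
                  - 2 * Real.pi ^ 2 * p * q * m ^ 2 * t ^ 2 + B) ∧
          ‖B‖ ≤ C * q * m ^ 3 * |t| ^ 3 := by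
  refine ⟨25 * (2 * Real.pi) ^ 3, by positivity, ?_⟩
  intro Ω _ μ _ m hm p q hp hp₁ hq β hβ h₀ hₘ φ hφ t hsin
  have hq₀ : 0 ≤ q := by linarith
  have hpq : p + q = 1 := by linarith
  have hφt : φ t = p + q * exp ((2 * Real.pi * t * m : ℝ) * I) := by
    rw [hφ, integral_comp_of_two_valued hβ hm.ne hp.le hq₀ hpq h₀ hₘ
      (fun x : ℝ ↦ exp (2 * Real.pi * I * t * x))]
    push_cast
    simp [mul_right_comm _ I]
  obtain ⟨B, hB, hB_le⟩ := exists_two_point_eq_exp (θ := 2 * Real.pi * t * m) hp.le hq₀ hpq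
    (by rwa [show 2 * Real.pi * t * m / 2 = Real.pi * t * m by ring])
  refine ⟨B, ?_, hB_le.trans_eq ?_⟩
  · rw [hφt, hB]
    push_cast
    congr 1
    ring
  · rw [abs_mul, abs_mul, abs_mul, abs_of_pos hm, abs_of_pos Real.pi_pos, abs_two]
    ring
end

section
/- For every real t with |t| ≤ 1/2 and all positive integers m and k with k ≥ 2, one has Σ_{j=m}^{m+k-1} sin²(πjt) ≥ (k/4)·min(1, (tk)²). -/
/-!
With `θ = π t`, the product-to-sum identity
`4 sin θ sin² u = 2 sin θ - (sin (2u + θ) - sin (2u - θ))` makes the sum telescope, so that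
`∑ sin² ((m + i) θ) ≥ k / 2 - |sin (k θ)| / (2 sin θ)`.
If `t k ≥ 1`, Jordan's inequality `sin θ ≥ 2 t ≥ 2 / k` bounds the error term by `k / 4`.
If `t k ≤ 1`, write `sin (k θ) = 2 sin (k θ / 2) cos (k θ / 2)`: concavity of `sin` gives
`sin (k θ / 2) ≤ (k / 2) sin θ`, and the quadratic bound `cos x ≤ 1 - 2 x² / π²` gives
`cos (k θ / 2) ≤ 1 - (t k)² / 2`.
-/

open Finset Real

lemma Finset.sum_Icc_add_sub_one_eq_sum_range {M : Type*} [AddCommMonoid M] (f : ℕ → M)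
    (m : ℕ) {k : ℕ} (hk : 1 ≤ k) :
    ∑ j ∈ Icc m (m + k - 1), f j = ∑ i ∈ range k, f (m + i) := by
  rw [← Ico_add_one_right_eq_Icc, Nat.sub_add_cancel (by omega), sum_Ico_eq_sum_range,
    Nat.add_sub_cancel_left]

namespace Real

lemma four_mul_sin_mul_sin_sq (θ u : ℝ) :
    4 * sin θ * sin u ^ 2 = 2 * sin θ - (sin (2 * u + θ) - sin (2 * u - θ)) := by
  rw [sin_add, sin_sub, cos_two_mul, cos_sq']
  ring

lemma four_mul_sin_mul_sum_range_sin_sq (θ a : ℝ) (k : ℕ) :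
    4 * sin θ * ∑ i ∈ range k, sin ((a + i) * θ) ^ 2
      = 2 * k * sin θ - (sin ((2 * a + 2 * k - 1) * θ) - sin ((2 * a - 1) * θ)) := by
  induction k with
  | zero => simp
  | succ k ih =>
    rw [sum_range_succ, mul_add, ih, four_mul_sin_mul_sin_sq]
    push_cast
    ring_nf

lemma sub_abs_sin_nat_mul_le_sum_range_sin_sq {θ : ℝ} (hθ : 0 < sin θ) (a : ℝ) (k : ℕ) :
    k / 2 - |sin (k * θ)| / (2 * sin θ) ≤ ∑ i ∈ range k, sin ((a + i) * θ) ^ 2 := by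
  have hdiff : |sin ((2 * a + 2 * k - 1) * θ) - sin ((2 * a - 1) * θ)| ≤ 2 * |sin (k * θ)| := by
    rw [sin_sub_sin, abs_mul, abs_mul, abs_two]
    have : ((2 * a + 2 * k - 1) * θ - (2 * a - 1) * θ) / 2 = k * θ := by ring
    rw [this]
    nlinarith [abs_cos_le_one (((2 * a + 2 * k - 1) * θ + (2 * a - 1) * θ) / 2),
      abs_nonneg (sin (k * θ))]
  have hid := four_mul_sin_mul_sum_range_sin_sq θ a k
  generalize ∑ i ∈ range k, sin ((a + i) * θ) ^ 2 = S at hid ⊢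
  generalize sin ((2 * a + 2 * k - 1) * θ) - sin ((2 * a - 1) * θ) = D at hid hdiff
  have hS : S = k / 2 - D / (4 * sin θ) := by
    field_simp
    linarith
  rw [hS]
  gcongr k / 2 - ?_
  rw [div_le_div_iff₀ (by positivity) (by positivity)]
  nlinarith [le_abs_self D]

lemma two_mul_le_sin_pi_mul {t : ℝ} (ht₀ : 0 ≤ t) (ht : t ≤ 1 / 2) : 2 * t ≤ sin (π * t) := by
  have := mul_le_sin (x := π * t) (by positivity) (by nlinarith [pi_pos])
  rwa [← mul_assoc, div_mul_cancel₀ _ pi_ne_zero] at this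

lemma mul_sin_le_sin_mul {c x : ℝ} (hc₀ : 0 ≤ c) (hc : c ≤ 1) (hx₀ : 0 ≤ x) (hx : x ≤ π) :
    c * sin x ≤ sin (c * x) := by
  simpa using strictConcaveOn_sin_Icc.concaveOn.2 ⟨hx₀, hx⟩ ⟨le_rfl, pi_pos.le⟩
    hc₀ (sub_nonneg.2 hc) (add_sub_cancel c 1)

lemma cos_pi_mul_div_two_le {s : ℝ} (hs : |s| ≤ 2) : cos (π * s / 2) ≤ 1 - s ^ 2 / 2 := by
  have h := cos_le_one_sub_mul_cos_sq (x := π * s / 2) (by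
    rw [abs_div, abs_mul, abs_of_pos pi_pos, abs_two]; nlinarith [pi_pos])
  convert h using 2
  field_simp

lemma sin_nat_mul_pi_mul_le {k : ℕ} (hk : 2 ≤ k) {t : ℝ} (ht₀ : 0 ≤ t) (htk : t * k ≤ 1) :
    sin (k * (π * t)) ≤ k * sin (π * t) * (1 - (t * k) ^ 2 / 2) := by
  have hk' : (2 : ℝ) ≤ k := by exact_mod_cast hk
  set x := π * (t * k) / 2 with hx
  have hx₀ : 0 ≤ x := by positivity
  have hxπ : x ≤ π / 2 := by rw [hx]; nlinarith [pi_pos]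
  have hdouble : sin (k * (π * t)) = 2 * sin x * cos x := by
    rw [← sin_two_mul, hx]; ring_nf
  have hconcave : 2 / k * sin x ≤ sin (π * t) := by
    have h := mul_sin_le_sin_mul (c := 2 / k) (x := x) (by positivity)
      ((div_le_one (by positivity)).2 hk') hx₀ (by linarith [pi_pos])
    rwa [show 2 / (k : ℝ) * x = π * t by rw [hx]; field_simp] at h
  have hcos : cos x ≤ 1 - (t * k) ^ 2 / 2 :=
    cos_pi_mul_div_two_le (by rw [abs_of_nonneg (by positivity)]; linarith)
  have hcos₀ : 0 ≤ cos x := cos_nonneg_of_mem_Icc ⟨by linarith, hxπ⟩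
  have hsin₀ : 0 ≤ sin x := sin_nonneg_of_nonneg_of_le_pi hx₀ (by linarith [pi_pos])
  have hsin_le : 2 * sin x ≤ k * sin (π * t) := by
    rw [div_mul_eq_mul_div, div_le_iff₀ (by positivity)] at hconcave
    linarith
  rw [hdouble]
  calc 2 * sin x * cos x ≤ k * sin (π * t) * cos x := by gcongr
    _ ≤ k * sin (π * t) * (1 - (t * k) ^ 2 / 2) := by
      gcongr
      linarith

lemma abs_sin_nat_mul_pi_mul_div_le {k : ℕ} (hk : 2 ≤ k) {t : ℝ} (ht₀ : 0 < t) (ht : t ≤ 1 / 2) :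
    |sin (k * (π * t))| / (2 * sin (π * t)) ≤ k / 2 - k / 4 * min 1 ((t * k) ^ 2) := by
  have hk' : (2 : ℝ) ≤ k := by exact_mod_cast hk
  have hsin : 2 * t ≤ sin (π * t) := two_mul_le_sin_pi_mul ht₀.le ht
  rw [div_le_iff₀ (by linarith)]
  rcases le_total 1 (t * k) with htk | htk
  · rw [min_eq_left (one_le_pow₀ htk)]
    nlinarith [abs_sin_le_one (k * (π * t))]
  · have hsin_le := sin_nat_mul_pi_mul_le hk ht₀.le htk
    have hsin_nonneg : 0 ≤ sin (k * (π * t)) :=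
      sin_nonneg_of_nonneg_of_le_pi (by positivity) (by nlinarith [pi_pos])
    rw [min_eq_right (pow_le_one₀ (by positivity) htk), abs_of_nonneg hsin_nonneg]
    nlinarith

end Real

theorem sum_sin_sq_lower_bound_general (t : ℝ) (ht : |t| ≤ 1 / 2)
    (m k : ℕ) (hk : 2 ≤ k) :
    ∑ j ∈ Finset.Icc m (m + k - 1), Real.sin (Real.pi * (j : ℝ) * t) ^ 2
      ≥ ((k : ℝ) / 4) * min 1 ((t * k) ^ 2) := by
  wlog ht₀ : 0 ≤ t generalizing t
  · simpa [sin_neg] using this (-t) (by rwa [abs_neg]) (by linarith)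
  rcases ht₀.eq_or_lt with rfl | htpos
  · simp
  have ht : t ≤ 1 / 2 := (le_abs_self t).trans ht
  have hsin : 0 < sin (π * t) := by linarith [two_mul_le_sin_pi_mul ht₀ ht]
  rw [ge_iff_le, sum_Icc_add_sub_one_eq_sum_range _ m (by omega)]
  calc k / 4 * min 1 ((t * k) ^ 2)
      ≤ k / 2 - |sin (k * (π * t))| / (2 * sin (π * t)) := by
        linarith [abs_sin_nat_mul_pi_mul_div_le hk htpos ht]
    _ ≤ ∑ i ∈ range k, sin ((m + i) * (π * t)) ^ 2 :=
        sub_abs_sin_nat_mul_le_sum_range_sin_sq hsin m k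
    _ = ∑ i ∈ range k, sin (π * ↑(m + i) * t) ^ 2 :=
        sum_congr rfl fun i _ => by push_cast; ring_nf

/-- Freiman–Pitman's Lemma 8: a lower bound for sums of squared sines over a
block of `k` consecutive integer frequencies starting at `m`. -/
theorem sum_sin_sq_lower_bound (t : ℝ) (ht : |t| ≤ 1 / 2)
    (m k : ℕ) (hm : 0 < m) (hk : 2 ≤ k) :
    ∑ j ∈ Finset.Icc m (m + k - 1), Real.sin (Real.pi * (j : ℝ) * t) ^ 2
      ≥ ((k : ℝ) / 4) * min 1 ((t * k) ^ 2) :=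
  sum_sin_sq_lower_bound_general t ht m k hk
end

section
/- Let ν be a positive integer, let ϑ_1,…,ϑ_ν be reals with 0 < ϑ_j < 1, let k_1 < k_2 < … < k_ν be positive integers, and let β_1,…,β_ν be independent random variables with P{β_j = 0} = ϑ_j and P{β_j = k_j} = 1 − ϑ_j. Set B_ν = β_1 + … + β_ν, φ_{B_ν}(t) = E e^{2πitB_ν}, θ_j = ϑ_j(1−ϑ_j), and for a positive integer q let φ(q) = (∫_{−1/2}^{1/2} |Σ_{j=1}^{ν} θ_j cos(2πtk_j)|^{2q} dt)^{1/(2q)} / (Σ_{j=1}^{ν} θ_j). Then for every positive integer q and every real c with 0 < c ≤ 1, ∫₀¹ |φ_{B_ν}(t)| dt ≤ (φ(q)/c)^{2q} + exp(−(1−c)·Σ_{j=1}^{ν} θ_j). -/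
/-! By independence, `φ_{B_ν}(t) = ∏ⱼ (ϑⱼ + (1 - ϑⱼ) e^{2πitkⱼ})`, and
`|ϑ + (1 - ϑ) e^{ia}|² = 1 - 2ϑ(1 - ϑ)(1 - cos a) ≤ exp (-2ϑ(1 - ϑ)(1 - cos a))`, so
`|φ_{B_ν}(t)| ≤ exp (-(S - g t))` with `S = ∑ θⱼ ≥ g t = ∑ θⱼ cos (2πtkⱼ)`. Where `g t ≤ cS` this is
at most `exp (-(1 - c)S)`; where `g t > cS` we bound `|φ_{B_ν}(t)| ≤ 1 ≤ (g t / (cS))^{2q}`, as in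
Markov's inequality. Integrating over a period of `g` gives `(φ(q) / c)^{2q}` for the first term. -/

open MeasureTheory ProbabilityTheory Finset Complex

section TwoPoint
variable {Ω : Type*} [MeasurableSpace Ω] {μ : Measure Ω} [IsProbabilityMeasure μ]
  {X : Ω → ℝ} {p a b : ℝ}

lemma ae_eq_or_eq_of_two_point (hX : Measurable X) (hp0 : 0 ≤ p) (hp1 : p ≤ 1) (hab : a ≠ b)
    (ha : μ {ω | X ω = a} = ENNReal.ofReal p) (hb : μ {ω | X ω = b} = ENNReal.ofReal (1 - p)) :
    ∀ᵐ ω ∂μ, X ω = a ∨ X ω = b := by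
  have hdisj : Disjoint {ω | X ω = a} {ω | X ω = b} :=
    Set.disjoint_left.2 fun ω (h₁ : X ω = a) (h₂ : X ω = b) => hab (h₁ ▸ h₂)
  rw [ae_iff_measure_eq (p := fun ω => X ω = a ∨ X ω = b) ((hX (measurableSet_singleton a)).union
    (hX (measurableSet_singleton b))).nullMeasurableSet, Set.ofPred_or,
    measure_union hdisj (hX (measurableSet_singleton b)), ha, hb,
    ← ENNReal.ofReal_add hp0 (by linarith)]
  simp

lemma integral_comp_of_two_point {E : Type*} [NormedAddCommGroup E] [NormedSpace ℝ E]
    [CompleteSpace E] (hX : Measurable X) (hp0 : 0 ≤ p) (hp1 : p ≤ 1) (hab : a ≠ b)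
    (ha : μ {ω | X ω = a} = ENNReal.ofReal p) (hb : μ {ω | X ω = b} = ENNReal.ofReal (1 - p))
    (f : ℝ → E) :
    ∫ ω, f (X ω) ∂μ = p • f a + (1 - p) • f b := by
  have hA : MeasurableSet {ω | X ω = a} := hX (measurableSet_singleton a)
  have hB : MeasurableSet {ω | X ω = b} := hX (measurableSet_singleton b)
  calc ∫ ω, f (X ω) ∂μ
      = ∫ ω, ({ω | X ω = a}.indicator (fun _ => f a) ω
          + {ω | X ω = b}.indicator (fun _ => f b) ω) ∂μ := by
        refine integral_congr_ae ?_
        filter_upwards [ae_eq_or_eq_of_two_point hX hp0 hp1 hab ha hb] with ω hω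
        rcases hω with h | h <;> simp [Set.indicator, h, hab, hab.symm]
    _ = p • f a + (1 - p) • f b := by
        rw [integral_add ((integrable_const _).indicator hA) ((integrable_const _).indicator hB),
          integral_indicator_const _ hA, integral_indicator_const _ hB, measureReal_def,
          measureReal_def, ha, hb, ENNReal.toReal_ofReal hp0, ENNReal.toReal_ofReal (by linarith)]

lemma charFun_map_of_two_point (hX : Measurable X) (hp0 : 0 ≤ p) (hp1 : p ≤ 1) (hb0 : b ≠ 0)
    (h0 : μ {ω | X ω = 0} = ENNReal.ofReal p) (hb : μ {ω | X ω = b} = ENNReal.ofReal (1 - p))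
    (s : ℝ) :
    charFun (μ.map X) s = p + (1 - p) * exp (b * s * I) := by
  rw [charFun_apply_real, integral_map hX.aemeasurable (by fun_prop),
    integral_comp_of_two_point hX hp0 hp1 hb0.symm h0 hb (fun x : ℝ => exp (s * x * I))]
  simp [mul_comm]


end TwoPoint

lemma norm_two_point_charFun_le (p a : ℝ) :
    ‖(p : ℂ) + (1 - p) * exp (a * I)‖ ≤ Real.exp (-(p * (1 - p)) * (1 - Real.cos a)) := by
  have hsq : ‖(p : ℂ) + (1 - p) * exp (a * I)‖ ^ 2 = 1 - 2 * (p * (1 - p)) * (1 - Real.cos a) := by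
    rw [Complex.sq_norm, Complex.normSq_apply]
    simp only [add_re, add_im, mul_re, mul_im, exp_ofReal_mul_I_re, exp_ofReal_mul_I_im,
      ofReal_re, ofReal_im, sub_re, sub_im, one_re, one_im]
    linear_combination (1 - p) ^ 2 * Real.sin_sq_add_cos_sq a
  refine le_of_pow_le_pow_left₀ two_ne_zero (Real.exp_nonneg _) ?_
  rw [hsq, ← Real.exp_nat_mul, Nat.cast_ofNat]
  linarith [Real.add_one_le_exp (2 * (-(p * (1 - p)) * (1 - Real.cos a)))]

section IndependentTwoPoint
variable {Ω : Type*} [MeasurableSpace Ω] {μ : Measure Ω} [IsProbabilityMeasure μ]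
  {β : ℕ → Ω → ℝ} {ϑ b : ℕ → ℝ} {s : Finset ℕ}

lemma charFun_map_sum_of_two_point (hmeas : ∀ j, Measurable (β j)) (hindep : iIndepFun β μ)
    (hϑ : ∀ j ∈ s, 0 ≤ ϑ j ∧ ϑ j ≤ 1) (hb : ∀ j ∈ s, b j ≠ 0)
    (h0 : ∀ j ∈ s, μ {ω | β j ω = 0} = ENNReal.ofReal (ϑ j))
    (hβb : ∀ j ∈ s, μ {ω | β j ω = b j} = ENNReal.ofReal (1 - ϑ j)) (t : ℝ) :
    charFun (μ.map fun ω => ∑ j ∈ s, β j ω) t = ∏ j ∈ s, (ϑ j + (1 - ϑ j) * exp (b j * t * I)) := by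
  rw [iIndepFun.charFun_map_fun_finsetSum_eq_prod (fun j _ => (hmeas j).aemeasurable)
    (iIndepFun_iff_finset.1 hindep s), Finset.prod_apply]
  exact prod_congr rfl fun j hj =>
    charFun_map_of_two_point (hmeas j) (hϑ j hj).1 (hϑ j hj).2 (hb j hj) (h0 j hj) (hβb j hj) t

lemma norm_charFun_map_sum_of_two_point_le (hmeas : ∀ j, Measurable (β j))
    (hindep : iIndepFun β μ) (hϑ : ∀ j ∈ s, 0 ≤ ϑ j ∧ ϑ j ≤ 1) (hb : ∀ j ∈ s, b j ≠ 0)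
    (h0 : ∀ j ∈ s, μ {ω | β j ω = 0} = ENNReal.ofReal (ϑ j))
    (hβb : ∀ j ∈ s, μ {ω | β j ω = b j} = ENNReal.ofReal (1 - ϑ j)) (t : ℝ) :
    ‖charFun (μ.map fun ω => ∑ j ∈ s, β j ω) t‖
      ≤ Real.exp (-∑ j ∈ s, ϑ j * (1 - ϑ j) * (1 - Real.cos (b j * t))) := by
  rw [charFun_map_sum_of_two_point hmeas hindep hϑ hb h0 hβb, norm_prod, ← sum_neg_distrib,
    Real.exp_sum]
  refine prod_le_prod (fun j _ => norm_nonneg _) fun j hj => ?_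
  rw [← neg_mul]
  exact_mod_cast norm_two_point_charFun_le (ϑ j) (b j * t)

end IndependentTwoPoint

lemma le_pow_add_exp_of_le_exp {x g S c : ℝ} (hc : 0 < c) (hc1 : c ≤ 1) (hgS : g ≤ S)
    (hx : x ≤ Real.exp (-(S - g))) (q : ℕ) :
    x ≤ (g / (c * S)) ^ (2 * q) + Real.exp (-(1 - c) * S) := by
  have hpow := (even_two_mul q).pow_nonneg (g / (c * S))
  rcases le_or_gt g (c * S) with hg | hg
  · have : Real.exp (-(S - g)) ≤ Real.exp (-(1 - c) * S) := Real.exp_le_exp.2 (by linarith)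
    linarith
  · have hcS : 0 < c * S := by nlinarith
    have h1 : 1 ≤ (g / (c * S)) ^ (2 * q) := one_le_pow₀ ((one_le_div hcS).2 hg.le)
    have h2 : Real.exp (-(S - g)) ≤ 1 := Real.exp_le_one_iff.2 (by linarith)
    linarith [Real.exp_pos (-(1 - c) * S)]

lemma intervalIntegral_norm_le_moment_add_exp {f : ℝ → ℂ} {g : ℝ → ℝ} {S c : ℝ}
    (hg : Continuous g) (hgS : ∀ t, g t ≤ S) (hf : ∀ t, ‖f t‖ ≤ Real.exp (-(S - g t)))
    (hc : 0 < c) (hc1 : c ≤ 1) (q : ℕ) :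
    ∫ t in (0 : ℝ)..1, ‖f t‖
      ≤ (∫ t in (0 : ℝ)..1, g t ^ (2 * q)) / (c * S) ^ (2 * q) + Real.exp (-(1 - c) * S) := by
  calc ∫ t in (0 : ℝ)..1, ‖f t‖
      ≤ ∫ t in (0 : ℝ)..1, ((g t / (c * S)) ^ (2 * q) + Real.exp (-(1 - c) * S)) := by
        simp only [intervalIntegral.integral_of_le zero_le_one]
        exact integral_mono_of_nonneg (.of_forall fun t => norm_nonneg _)
          (Continuous.integrableOn_Ioc (by fun_prop))
          (.of_forall fun t => le_pow_add_exp_of_le_exp hc hc1 (hgS t) (hf t) q)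
    _ = _ := by
        rw [intervalIntegral.integral_add
          ((by fun_prop : Continuous fun t => (g t / (c * S)) ^ (2 * q)).intervalIntegrable _ _)
          intervalIntegrable_const]
        simp [div_pow, intervalIntegral.integral_div]

lemma Function.Periodic.intervalIntegral_pow_two_mul_eq_abs_pow {g : ℝ → ℝ}
    (hg : Function.Periodic g 1) (q : ℕ) :
    ∫ t in (0 : ℝ)..1, g t ^ (2 * q) = ∫ t in (-(1 : ℝ) / 2)..(1 / 2), |g t| ^ (2 * q) := by
  simp only [(even_two_mul q).pow_abs]
  have := (hg.comp fun x => x ^ (2 * q)).intervalIntegral_add_eq 0 (-(1 : ℝ) / 2)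
  norm_num at this ⊢
  exact this

lemma rpow_one_div_two_mul_div_div_pow {I S c : ℝ} (hI : 0 ≤ I) {q : ℕ} (hq : q ≠ 0) :
    (I ^ ((1 : ℝ) / (2 * q)) / S / c) ^ (2 * q) = I / (c * S) ^ (2 * q) := by
  have : I ^ ((1 : ℝ) / (2 * q)) = I ^ (((2 * q : ℕ) : ℝ)⁻¹) := by push_cast; rw [one_div]
  rw [this, div_div, div_pow, Real.rpow_inv_natCast_pow hI (by omega), mul_comm]

theorem integral_charFun_bound_moment_method_general
    {Ω : Type*} [MeasurableSpace Ω] (μ : Measure Ω) [IsProbabilityMeasure μ]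
    (ν : ℕ)
    (ϑ : ℕ → ℝ) (hϑ : ∀ j < ν, 0 < ϑ j ∧ ϑ j < 1)
    (k : ℕ → ℕ) (hkpos : ∀ j < ν, 0 < k j)
    (β : ℕ → Ω → ℝ) (hmeas : ∀ j, Measurable (β j))
    (hindep : iIndepFun β μ)
    (hβ0 : ∀ j < ν, μ {ω | β j ω = 0} = ENNReal.ofReal (ϑ j))
    (hβk : ∀ j < ν, μ {ω | β j ω = (k j : ℝ)} = ENNReal.ofReal (1 - ϑ j))
    (φB : ℝ → ℂ)
    (hφB : ∀ t : ℝ, φB t = ∫ ω, Complex.exp (2 * Real.pi * Complex.I * t *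
        (∑ j ∈ Finset.range ν, β j ω)) ∂μ)
    (θ : ℕ → ℝ) (hθ : ∀ j, θ j = ϑ j * (1 - ϑ j))
    (φ : ℕ → ℝ)
    (hφ : ∀ q : ℕ, φ q =
      (∫ t in (-(1 : ℝ) / 2)..(1 / 2),
          |∑ j ∈ Finset.range ν, θ j * Real.cos (2 * Real.pi * t * (k j : ℝ))| ^ (2 * q))
        ^ ((1 : ℝ) / (2 * q)) / (∑ j ∈ Finset.range ν, θ j)) :
    ∀ (q : ℕ), 0 < q → ∀ (c : ℝ), 0 < c → c ≤ 1 →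
      (∫ t in (0 : ℝ)..1, ‖φB t‖)
        ≤ (φ q / c) ^ (2 * q)
          + Real.exp (-(1 - c) * ∑ j ∈ Finset.range ν, θ j) := by
  intro q hq c hc hc1
  set S := ∑ j ∈ range ν, θ j
  set g : ℝ → ℝ := fun t => ∑ j ∈ range ν, θ j * Real.cos (2 * Real.pi * t * k j)
  have hϑ' : ∀ j ∈ range ν, 0 ≤ ϑ j ∧ ϑ j ≤ 1 := fun j hj =>
    ⟨(hϑ j (mem_range.1 hj)).1.le, (hϑ j (mem_range.1 hj)).2.le⟩
  have hφB_le (t : ℝ) : ‖φB t‖ ≤ Real.exp (-(S - g t)) := by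
    have hφBt : φB t = charFun (μ.map fun ω => ∑ j ∈ range ν, β j ω) (2 * Real.pi * t) := by
      rw [hφB, charFun_apply_real, integral_map (by fun_prop) (by fun_prop)]
      push_cast
      ring_nf
    rw [hφBt]
    convert norm_charFun_map_sum_of_two_point_le hmeas hindep hϑ'
      (fun j hj => Nat.cast_ne_zero.2 (hkpos j (mem_range.1 hj)).ne')
      (fun j hj => hβ0 j (mem_range.1 hj)) (fun j hj => hβk j (mem_range.1 hj)) (2 * Real.pi * t)
      using 2
    simp only [S, g, hθ, ← sum_sub_distrib]
    exact congrArg _ (sum_congr rfl fun j _ => by ring_nf)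
  have hgS (t : ℝ) : g t ≤ S := sum_le_sum fun j hj => by
    rw [hθ]
    exact mul_le_of_le_one_right (mul_nonneg (hϑ' j hj).1 (by linarith [hϑ' j hj]))
      (Real.cos_le_one _)
  have hg_periodic : Function.Periodic g 1 := fun t => sum_congr rfl fun j _ => by
    rw [show 2 * Real.pi * (t + 1) * k j = 2 * Real.pi * t * k j + k j * (2 * Real.pi) by ring,
      Real.cos_add_nat_mul_two_pi]
  have hmoment_nonneg : 0 ≤ ∫ t in (-(1 : ℝ) / 2)..(1 / 2), |g t| ^ (2 * q) :=
    intervalIntegral.integral_nonneg (by norm_num) fun t _ => by positivity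
  calc ∫ t in (0 : ℝ)..1, ‖φB t‖
      ≤ (∫ t in (0 : ℝ)..1, g t ^ (2 * q)) / (c * S) ^ (2 * q) + Real.exp (-(1 - c) * S) :=
        intervalIntegral_norm_le_moment_add_exp (by fun_prop) hgS hφB_le hc hc1 q
    _ = (φ q / c) ^ (2 * q) + Real.exp (-(1 - c) * S) := by
        rw [hg_periodic.intervalIntegral_pow_two_mul_eq_abs_pow, hφ q,
          rpow_one_div_two_mul_div_div_pow hmoment_nonneg hq.ne']

theorem integral_charFun_bound_moment_method
    {Ω : Type*} [MeasurableSpace Ω] (μ : Measure Ω) [IsProbabilityMeasure μ]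
    (ν : ℕ) (hν : 0 < ν)
    (ϑ : ℕ → ℝ) (hϑ : ∀ j < ν, 0 < ϑ j ∧ ϑ j < 1)
    (k : ℕ → ℕ) (hkpos : ∀ j < ν, 0 < k j)
    (hkmono : ∀ i j, i < j → j < ν → k i < k j)
    (β : ℕ → Ω → ℝ) (hmeas : ∀ j, Measurable (β j))
    (hindep : iIndepFun β μ)
    (hβ0 : ∀ j < ν, μ {ω | β j ω = 0} = ENNReal.ofReal (ϑ j))
    (hβk : ∀ j < ν, μ {ω | β j ω = (k j : ℝ)} = ENNReal.ofReal (1 - ϑ j))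
    (φB : ℝ → ℂ)
    (hφB : ∀ t : ℝ, φB t = ∫ ω, Complex.exp (2 * Real.pi * Complex.I * t *
        (∑ j ∈ Finset.range ν, β j ω)) ∂μ)
    (θ : ℕ → ℝ) (hθ : ∀ j, θ j = ϑ j * (1 - ϑ j))
    (φ : ℕ → ℝ)
    (hφ : ∀ q : ℕ, φ q =
      (∫ t in (-(1 : ℝ) / 2)..(1 / 2),
          |∑ j ∈ Finset.range ν, θ j * Real.cos (2 * Real.pi * t * (k j : ℝ))| ^ (2 * q))
        ^ ((1 : ℝ) / (2 * q)) / (∑ j ∈ Finset.range ν, θ j)) :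
    ∀ (q : ℕ), 0 < q → ∀ (c : ℝ), 0 < c → c ≤ 1 →
      (∫ t in (0 : ℝ)..1, ‖φB t‖)
        ≤ (φ q / c) ^ (2 * q)
          + Real.exp (-(1 - c) * ∑ j ∈ Finset.range ν, θ j) :=
  integral_charFun_bound_moment_method_general μ ν ϑ hϑ k hkpos β hmeas hindep hβ0 hβk φB hφB θ hθ φ
    hφ
end

section
/- Let n be a positive integer and let Z_1,…,Z_n be independent Poisson distributed random variables with E Z_j = 1/j for j = 1,…,n. Let T_n = Σ_{j=1}^{n} j·Z_j. Then P{T_n = n} = exp(−Σ_{j=1}^{n} 1/j). -/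
open MeasureTheory ProbabilityTheory Finset

open scoped Nat

/-!
Conditioning on the values of the independent `Z j` gives `P(T_n = k) = exp(-H_n) c_k`, where
`c_k = ∑ ∏ j, (1/j)^(m j) / (m j)!` over the tuples with `∑ j, j * m j = k` is the coefficient
of `x^k` in `F = ∏ j ≤ n, exp(x^j / j)`. Comparing coefficients in `F' = (∑ j ≤ n, x^(j-1)) F`
gives `k c_k = ∑ j ∈ [1, min k n], c_(k-j)`, hence `c_k = 1` for `k ≤ n` by strong induction.
-/

section WeightedTuples

variable {ι : Type*} [Fintype ι] {w : ι → ℕ} {k : ℕ} {m : ι → ℕ}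

lemma mul_le_of_sum_mul_eq (hm : ∑ i, w i * m i = k) (i : ι) : w i * m i ≤ k :=
  hm ▸ single_le_sum (f := fun i => w i * m i) (fun _ _ => Nat.zero_le _) (mem_univ i)

variable [DecidableEq ι]

def weightedTuples (w : ι → ℕ) (k : ℕ) : Finset (ι → ℕ) :=
  (Fintype.piFinset fun _ => range (k + 1)).filter fun m => ∑ i, w i * m i = k

lemma mem_weightedTuples (hw : ∀ i, 0 < w i) :
    m ∈ weightedTuples w k ↔ ∑ i, w i * m i = k := by
  refine ⟨fun h => (mem_filter.mp h).2, fun h => mem_filter.mpr ⟨?_, h⟩⟩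
  refine Fintype.mem_piFinset.mpr fun i => mem_range.mpr (Nat.lt_succ_of_le ?_)
  exact (Nat.le_mul_of_pos_left _ (hw i)).trans (mul_le_of_sum_mul_eq h i)

lemma weightedTuples_zero (hw : ∀ i, 0 < w i) : weightedTuples w 0 = {0} := by
  ext m
  simp only [mem_weightedTuples hw, mem_singleton, sum_eq_zero_iff, mem_univ, true_implies,
    mul_eq_zero, (hw _).ne', false_or, funext_iff, Pi.zero_apply]

lemma sum_mul_add_single (i : ι) :
    ∑ l, w l * (m + Pi.single i 1 : ι → ℕ) l = ∑ l, w l * m l + w i := by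
  simp [mul_add, sum_add_distrib, Pi.single_apply]

lemma filter_ne_zero_weightedTuples (hw : ∀ i, 0 < w i) {i : ι} (hi : w i ≤ k) :
    (weightedTuples w k).filter (fun m => m i ≠ 0)
      = (weightedTuples w (k - w i)).map (addRightEmbedding (Pi.single i 1)) := by
  ext m
  simp only [mem_filter, mem_map, mem_weightedTuples hw, addRightEmbedding_apply]
  constructor
  · rintro ⟨hm, hmi⟩
    have hsplit : m - Pi.single i 1 + Pi.single i 1 = m := by
      ext l
      rcases eq_or_ne l i with rfl | hl <;> simp [*]
      omega
    refine ⟨m - Pi.single i 1, ?_, hsplit⟩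
    have := sum_mul_add_single (w := w) (m := m - Pi.single i 1) i
    rw [hsplit] at this
    omega
  · rintro ⟨m, hm, rfl⟩
    rw [sum_mul_add_single, hm]
    simp [hi]

variable {K : Type*} [Field K] [CharZero K]

def expTerm (a : ι → K) (m : ι → ℕ) : K := ∏ i, a i ^ m i / (m i)!

/-- The coefficient of `x^k` in `∏ i, exp (a i * x ^ w i)`. -/
def expCoeff (w : ι → ℕ) (a : ι → K) (k : ℕ) : K := ∑ m ∈ weightedTuples w k, expTerm a m

lemma expCoeff_zero (hw : ∀ i, 0 < w i) (a : ι → K) : expCoeff w a 0 = 1 := by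
  simp [expCoeff, expTerm, weightedTuples_zero hw]

lemma succ_mul_pow_div_factorial (x : K) (v : ℕ) :
    ((v : K) + 1) * (x ^ (v + 1) / (v + 1)!) = x * (x ^ v / v !) := by
  rw [Nat.factorial_succ, Nat.cast_mul]
  field_simp
  push_cast
  ring

lemma mul_expTerm_add_single (a : ι → K) (m : ι → ℕ) (i : ι) :
    ((m i : K) + 1) * expTerm a (m + Pi.single i 1) = a i * expTerm a m := by
  simp only [expTerm]
  rw [Fintype.prod_eq_mul_prod_compl i, Fintype.prod_eq_mul_prod_compl i]
  have hcompl : ∏ l ∈ {i}ᶜ, a l ^ (m + Pi.single i 1 : ι → ℕ) l / ((m + Pi.single i 1 : ι → ℕ) l)!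
      = ∏ l ∈ {i}ᶜ, a l ^ m l / (m l)! :=
    prod_congr rfl fun l hl => by simp [show l ≠ i by simpa using hl]
  rw [hcompl, ← mul_assoc, ← mul_assoc, Pi.add_apply, Pi.single_eq_same, succ_mul_pow_div_factorial]

lemma sum_mul_expTerm_weightedTuples (hw : ∀ i, 0 < w i) (a : ι → K) (i : ι) :
    ∑ m ∈ weightedTuples w k, (m i : K) * expTerm a m
      = if w i ≤ k then a i * expCoeff w a (k - w i) else 0 := by
  split_ifs with hi
  · rw [← sum_filter_of_ne (p := fun m => m i ≠ 0) fun m _ h hm => h (by simp [hm]),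
      filter_ne_zero_weightedTuples hw hi, sum_map, expCoeff, mul_sum]
    refine sum_congr rfl fun m _ => ?_
    simp only [addRightEmbedding_apply, Pi.add_apply, Pi.single_eq_same, Nat.cast_add, Nat.cast_one]
    exact mul_expTerm_add_single a m i
  · refine sum_eq_zero fun m hm => ?_
    have : m i = 0 := by
      by_contra h
      have := mul_le_of_sum_mul_eq ((mem_weightedTuples hw).mp hm) i
      have := Nat.le_mul_of_pos_right (w i) (Nat.pos_of_ne_zero h)
      omega
    simp [this]

theorem cast_mul_expCoeff (hw : ∀ i, 0 < w i) (a : ι → K) (k : ℕ) :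
    (k : K) * expCoeff w a k = ∑ i with w i ≤ k, (w i : K) * a i * expCoeff w a (k - w i) := by
  have hk : ∀ m ∈ weightedTuples w k, (k : K) = ∑ i, (w i : K) * m i := fun m hm => by
    rw [← (mem_weightedTuples hw).mp hm]
    push_cast
    rfl
  calc (k : K) * expCoeff w a k
      = ∑ i, (w i : K) * ∑ m ∈ weightedTuples w k, (m i : K) * expTerm a m := by
        simp_rw [expCoeff, mul_sum, sum_congr rfl fun m hm => congrArg (· * expTerm a m) (hk m hm),
          sum_mul, mul_assoc]
        exact sum_comm
    _ = ∑ i with w i ≤ k, (w i : K) * a i * expCoeff w a (k - w i) := by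
        simp_rw [sum_mul_expTerm_weightedTuples hw, mul_ite, mul_zero, sum_ite, sum_const_zero,
          add_zero, mul_assoc]

end WeightedTuples

lemma card_filter_val_le_of_le {n k : ℕ} (hk : k ≤ n) : #{j : Icc 1 n | (j : ℕ) ≤ k} = k := by
  suffices #{j : Icc 1 n | (j : ℕ) ≤ k} = #(Icc 1 k) by simpa
  refine card_bij (fun j _ => (j : ℕ))
    (fun j hj => mem_Icc.mpr ⟨(mem_Icc.mp j.2).1, (mem_filter.mp hj).2⟩)
    (fun _ _ _ _ => Subtype.ext) fun j hj => ?_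
  obtain ⟨hj1, hjk⟩ := mem_Icc.mp hj
  exact ⟨⟨j, mem_Icc.mpr ⟨hj1, hjk.trans hk⟩⟩, mem_filter.mpr ⟨mem_univ _, hjk⟩, rfl⟩

theorem expCoeff_Icc_inv_eq_one {K : Type*} [Field K] [CharZero K] {n k : ℕ} (hk : k ≤ n) :
    expCoeff (fun j : Icc 1 n => (j : ℕ)) (fun j => 1 / (j : K)) k = 1 := by
  have hw : ∀ j : Icc 1 n, 0 < (j : ℕ) := fun j => (mem_Icc.mp j.2).1
  induction k using Nat.strong_induction_on with
  | _ k ih =>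
    rcases k.eq_zero_or_pos with rfl | hk0
    · exact expCoeff_zero hw _
    have hrec := cast_mul_expCoeff hw (fun j : Icc 1 n => 1 / ((j : ℕ) : K)) k
    rw [sum_congr rfl fun j _ => by
        rw [ih _ (Nat.sub_lt hk0 (hw j)) (by omega), mul_one,
          mul_one_div_cancel (Nat.cast_ne_zero.mpr (hw j).ne')], sum_const,
      card_filter_val_le_of_le hk, nsmul_one] at hrec
    exact mul_left_cancel₀ (Nat.cast_ne_zero.mpr hk0.ne') (hrec.trans (mul_one _).symm)

theorem measureReal_tuple_mem_eq_sum_prod {Ω ι : Type*} [MeasurableSpace Ω] {μ : Measure Ω}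
    [IsFiniteMeasure μ] [Fintype ι] {Z : ι → Ω → ℕ} (hZ : ∀ i, Measurable (Z i))
    (hindep : iIndepFun Z μ) (A : Finset (ι → ℕ)) :
    μ.real {ω | (fun i => Z i ω) ∈ A} = ∑ m ∈ A, ∏ i, μ.real {ω | Z i ω = m i} := by
  change μ.real ((fun ω i => Z i ω) ⁻¹' A) = _
  rw [← sum_measureReal_preimage_singleton A
    fun m _ => measurable_pi_lambda _ hZ (measurableSet_singleton m)]
  refine sum_congr rfl fun m _ => ?_
  have hfiber : (fun ω i => Z i ω) ⁻¹' {m} = ⋂ i, Z i ⁻¹' {m i} := by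
    ext ω
    simp [funext_iff]
  rw [hfiber, measureReal_def, hindep.meas_iInter fun i => ⟨{m i}, measurableSet_singleton _, rfl⟩,
    ENNReal.toReal_prod]
  rfl

theorem poisson_weighted_sum_prob_general
    {Ω : Type*} [MeasurableSpace Ω] (μ : Measure Ω) [IsProbabilityMeasure μ]
    (n : ℕ)
    (Z : ℕ → Ω → ℕ) (hmeas : ∀ j, Measurable (Z j))
    (hindep : iIndepFun Z μ)
    (hpois : ∀ j ∈ Finset.Icc 1 n, ∀ m : ℕ,
      μ {ω | Z j ω = m}
        = ENNReal.ofReal (Real.exp (-(1 / (j : ℝ))) * (1 / (j : ℝ)) ^ m / m.factorial)) :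
    (μ {ω | (∑ j ∈ Finset.Icc 1 n, j * Z j ω) = n}).toReal
      = Real.exp (-∑ j ∈ Finset.Icc 1 n, 1 / (j : ℝ)) := by
  let Y : Icc 1 n → Ω → ℕ := fun j => Z j
  have hevent : {ω | (∑ j ∈ Icc 1 n, j * Z j ω) = n}
      = {ω | (fun j => Y j ω) ∈ weightedTuples (fun j : Icc 1 n => (j : ℕ)) n} := by
    ext ω
    rw [Set.mem_ofPred_eq, Set.mem_ofPred_eq, mem_weightedTuples fun j => (mem_Icc.mp j.2).1,
      ← sum_coe_sort]
  have hY : ∀ (j : Icc 1 n) m, μ.real {ω | Y j ω = m}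
      = Real.exp (-(1 / (j : ℝ))) * ((1 / (j : ℝ)) ^ m / m !) := fun j m => by
    rw [measureReal_def, hpois j j.2, ENNReal.toReal_ofReal (by positivity), mul_div_assoc]
  rw [← measureReal_def, hevent,
    measureReal_tuple_mem_eq_sum_prod (Z := Y) (fun j => hmeas j)
      (hindep.precomp (g := Subtype.val) Subtype.val_injective)]
  simp_rw [hY, prod_mul_distrib, ← mul_sum]
  change _ * expCoeff (fun j : Icc 1 n => (j : ℕ)) (fun j => 1 / (j : ℝ)) n = _
  rw [expCoeff_Icc_inv_eq_one le_rfl, mul_one, ← Real.exp_sum, ← sum_neg_distrib,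
    sum_coe_sort (Icc 1 n) fun j => -(1 / (j : ℝ))]

theorem poisson_weighted_sum_prob
    {Ω : Type*} [MeasurableSpace Ω] (μ : Measure Ω) [IsProbabilityMeasure μ]
    (n : ℕ) (hn : 0 < n)
    (Z : ℕ → Ω → ℕ) (hmeas : ∀ j, Measurable (Z j))
    (hindep : iIndepFun Z μ)
    (hpois : ∀ j ∈ Finset.Icc 1 n, ∀ m : ℕ,
      μ {ω | Z j ω = m}
        = ENNReal.ofReal (Real.exp (-(1 / (j : ℝ))) * (1 / (j : ℝ)) ^ m / m.factorial)) :
    (μ {ω | (∑ j ∈ Finset.Icc 1 n, j * Z j ω) = n}).toReal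
      = Real.exp (-∑ j ∈ Finset.Icc 1 n, 1 / (j : ℝ)) :=
  poisson_weighted_sum_prob_general μ n Z hmeas hindep hpois
end
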